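/- Let V be a finite vertex set, G a simple graph on V, and for each i ∈ V let S i be a nonempty finite type (the state space of the unperturbed variable at i) and, for each i in a subset Z ⊆ V of perturbed nodes, let T i be a nonempty finite type (the state space of the perturbed measurement). Suppose the joint weight function P(y, u) = ∏_{q ∈ Q} Ψ_q(y restricted to q) · ∏_{i ∈ Z} Ψ_i(y i, u i) is a finite product in which each q ∈ Q is a clique of G, each Ψ_q is a nonnegative function of the coordinates of y in q, and each Ψ_i is a nonnegative function of (y i, u i). Then the marginal weight function obtained by summing P over all values of the hidden coordinates (y i for i ∈ Z) factorizes according to the perturbed graph G_Z: it is a finite product of nonnegative factors, each depending only on the observed coordinates (y i for i ∉ Z, and u i for i ∈ Z) belonging to some clique of G_Z. (Lemma 1.) -/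
import Mathlib


open scoped NNReal

/-- The adjacency relation of the perturbed graph `G_Z`: `p` and `q` (distinct) are
neighbors in `G_Z` iff there is a walk in `G` from `p` to `q` all of whose
intermediate vertices lie in `Z`. -/
def PerturbedAdj {V : Type*} (G : SimpleGraph V) (Z : Set V) (p q : V) : Prop :=
  p ≠ q ∧ ∃ w : G.Walk p q, ∀ v ∈ w.support, v ≠ p → v ≠ q → v ∈ Z


private lemma perturbedAdj_of_walk {V : Type*} {G : SimpleGraph V} {Z : Set V} {p q : V}
    (hne : p ≠ q) (w : G.Walk p q) (hw : ∀ v ∈ w.support, v = p ∨ v = q ∨ v ∈ Z) :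
    PerturbedAdj G Z p q :=
  ⟨hne, w, fun v hv h1 h2 => ((hw v hv).resolve_left h1).resolve_left h2⟩

private lemma perturbedAdj_mono {V : Type*} {G : SimpleGraph V} {Z Z' : Set V}
    (hZ : Z ⊆ Z') {p q : V} (h : PerturbedAdj G Z p q) : PerturbedAdj G Z' p q := by
  obtain ⟨hne, w, hw⟩ := h
  exact ⟨hne, w, fun v hv h1 h2 => hZ (hw v hv h1 h2)⟩

private lemma perturbedAdj_of_adj {V : Type*} {G : SimpleGraph V} {Z : Set V} {p q : V}
    (h : G.Adj p q) : PerturbedAdj G Z p q := by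
  refine ⟨h.ne, h.toWalk, fun v hv h1 h2 => ?_⟩
  simp [SimpleGraph.Adj.toWalk, SimpleGraph.Walk.support_cons] at hv
  tauto

private lemma auxmain {V : Type*} [Fintype V] [DecidableEq V] (G : SimpleGraph V) (W : Set V)
    (S : V → Type*) [∀ i, Fintype (S i)] (T : V → Type*) (Z : Finset V) :
    ∀ (ι : Type _) [Fintype ι] (q : ι → Set V), (∀ k, G.IsClique (q k)) →
    ∀ (Φ : ι → (∀ i, S i) → (∀ i, T i) → ℝ≥0),
    (∀ k (y y' : ∀ i, S i) (u u' : ∀ i, T i),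
      (∀ v ∈ q k, y v = y' v) → (∀ v ∈ q k, v ∈ W → u v = u' v) → Φ k y u = Φ k y' u') →
    ∃ (m' : ℕ) (c : Fin m' → Set V) (φ : Fin m' → (∀ i, S i) → (∀ i, T i) → ℝ≥0),
      (∀ j, (c j).Pairwise (PerturbedAdj G (↑Z))) ∧
      (∀ j (y y' : ∀ i, S i) (u u' : ∀ i, T i),
        (∀ v ∈ c j, v ∉ Z → y v = y' v) → (∀ v ∈ c j, v ∈ W → u v = u' v) →
        φ j y u = φ j y' u') ∧
      (∀ (yb : ∀ i, S i) (u : ∀ i, T i),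
        (∑ h : (∀ i : {x // x ∈ Z}, S (i : V)),
            ∏ k, Φ k (fun i => if hi : i ∈ Z then h ⟨i, hi⟩ else yb i) u)
          = ∏ j, φ j yb u) := by
  classical
  induction Z using Finset.strongInduction with
  | _ Z IH =>
  intro ι hι q hq Φ hΦ
  by_cases hZe : Z = ∅
  · subst hZe
    let e : ι ≃ Fin (Fintype.card ι) := Fintype.equivFin ι
    refine ⟨Fintype.card ι, fun j => q (e.symm j), fun j yb u => Φ (e.symm j) yb u, ?_, ?_, ?_⟩
    · intro j a ha b hb hab
      exact perturbedAdj_of_adj (hq _ ha hb hab)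
    · intro j y y' u u' hy hu
      exact hΦ _ _ _ _ _ (fun v hv => hy v hv (by simp)) hu
    · intro yb u
      haveI : IsEmpty {x : V // x ∈ (∅ : Finset V)} := ⟨fun x => Finset.notMem_empty _ x.2⟩
      rw [Fintype.sum_unique]
      rw [Equiv.prod_comp e.symm (fun k => Φ k yb u)]
      refine Finset.prod_congr rfl fun k _ => hΦ k _ _ _ _ ?_ (fun v _ _ => rfl)
      intro v hv
      simp
  · obtain ⟨z, hz⟩ := Finset.nonempty_iff_ne_empty.mpr hZe
    set C : Finset V :=
      Z.filter (fun w => ∃ p : G.Walk z w, ∀ v ∈ p.support, v ∈ Z) with hCdef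
    have hCZ : C ⊆ Z := Finset.filter_subset _ _
    have hzC : z ∈ C := by
      refine Finset.mem_filter.mpr ⟨hz, ⟨SimpleGraph.Walk.nil, ?_⟩⟩
      intro v hv
      simp only [SimpleGraph.Walk.support_nil, List.mem_singleton] at hv
      simpa [hv] using hz
    have hCwalk : ∀ a ∈ C, ∃ p : G.Walk z a, ∀ v ∈ p.support, v ∈ Z := fun a ha =>
      (Finset.mem_filter.mp ha).2
    set Z' : Finset V := Z \ C with hZ'def
    have hZ'Z : Z' ⊆ Z := Finset.sdiff_subset
    have hZ'ss : Z' ⊂ Z := Finset.sdiff_ssubset hCZ ⟨z, hzC⟩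
    obtain ⟨m'', c', φ', hc'1, hc'2, hc'3⟩ := IH Z' hZ'ss ι q hq Φ hΦ
    set meets : Fin m'' → Prop := fun j => ∃ v ∈ c' j, v ∈ C with hmeetsdef
    set sub : (∀ i, S i) → (∀ i : {x // x ∈ C}, S (i : V)) → (∀ i, S i) :=
      fun yb h1 i => if hi : i ∈ C then h1 ⟨i, hi⟩ else yb i with hsubdef
    set newφ : (∀ i, S i) → (∀ i, T i) → ℝ≥0 :=
      fun yb u => ∑ h1 : (∀ i : {x // x ∈ C}, S (i : V)),
        ∏ j ∈ Finset.univ.filter (fun j => meets j), φ' j (sub yb h1) u with hnewφdef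
    set newc : Set V := ↑C ∪ ⋃ j ∈ Finset.univ.filter (fun j => meets j), c' j with hnewcdef
    have hgetC : ∀ v ∈ newc, ∃ x, x ∈ C ∧
        ∃ p : G.Walk v x, ∀ a ∈ p.support, a = v ∨ a ∈ Z := by
      intro v hv
      rcases hv with hv | hv
      · refine ⟨v, hv, SimpleGraph.Walk.nil, ?_⟩
        intro a ha
        simp only [SimpleGraph.Walk.support_nil, List.mem_singleton] at ha
        exact Or.inl ha
      · simp only [Set.mem_iUnion] at hv
        obtain ⟨j, hj, hvj⟩ := hv
        have hm : meets j := by simpa using hj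
        obtain ⟨x, hxc, hxC⟩ := hm
        by_cases hvx : v = x
        · subst hvx
          refine ⟨v, hxC, SimpleGraph.Walk.nil, ?_⟩
          intro a ha
          simp only [SimpleGraph.Walk.support_nil, List.mem_singleton] at ha
          exact Or.inl ha
        · obtain ⟨_, w, hw⟩ := hc'1 j hvj hxc hvx
          refine ⟨x, hxC, w, ?_⟩
          intro a ha
          by_cases hav : a = v
          · exact Or.inl hav
          · by_cases hax : a = x
            · exact Or.inr (by simpa [hax] using hCZ hxC)
            · exact Or.inr (hZ'Z (hw a ha hav hax))
    refine ⟨m'' + 1,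
      Fin.snoc (fun j => if meets j then (∅ : Set V) else c' j) newc,
      Fin.snoc (fun j y u => if meets j then 1 else φ' j y u) newφ, ?_, ?_, ?_⟩
    · refine Fin.lastCases ?_ (fun j => ?_)
      · simp only [Fin.snoc_last]
        intro a ha b hb hab
        obtain ⟨xa, hxa, wa, hwa⟩ := hgetC a ha
        obtain ⟨xb, hxb, wb, hwb⟩ := hgetC b hb
        obtain ⟨wza, hwza⟩ := hCwalk xa hxa
        obtain ⟨wzb, hwzb⟩ := hCwalk xb hxb
        refine perturbedAdj_of_walk hab ((wa.append (wza.reverse.append wzb)).append wb.reverse) ?_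
        intro v hv
        simp only [SimpleGraph.Walk.mem_support_append_iff,
          SimpleGraph.Walk.support_reverse, List.mem_reverse] at hv
        rcases hv with (hv | (hv | hv)) | hv
        · rcases hwa v hv with h | h
          · exact Or.inl h
          · exact Or.inr (Or.inr h)
        · exact Or.inr (Or.inr (hwza v hv))
        · exact Or.inr (Or.inr (hwzb v hv))
        · rcases hwb v hv with h | h
          · exact Or.inr (Or.inl h)
          · exact Or.inr (Or.inr h)
      · simp only [Fin.snoc_castSucc]
        by_cases hm : meets j
        · simp [hm]
        · simp only [if_neg hm]
          intro a ha b hb hab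
          exact perturbedAdj_mono (Finset.coe_subset.mpr hZ'Z) (hc'1 j ha hb hab)
    · refine Fin.lastCases ?_ (fun j => ?_)
      · intro y y' u u' hy hu
        simp only [Fin.snoc_last] at hy hu ⊢
        refine Finset.sum_congr rfl fun h1 _ => Finset.prod_congr rfl fun j hj => ?_
        have hjm : j ∈ Finset.univ.filter (fun j => meets j) := hj
        refine hc'2 j _ _ _ _ ?_ ?_
        · intro v hv hvZ'
          by_cases hvC : v ∈ C
          · simp [hsubdef, hvC]
          · have hvZ : v ∉ Z := fun hh => hvZ' (Finset.mem_sdiff.mpr ⟨hh, hvC⟩)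
            have hvnew : v ∈ newc := Or.inr (Set.mem_iUnion₂.mpr ⟨j, hjm, hv⟩)
            simpa [hsubdef, hvC] using hy v hvnew hvZ
        · intro v hv hvW
          exact hu v (Or.inr (Set.mem_iUnion₂.mpr ⟨j, hjm, hv⟩)) hvW
      · intro y y' u u' hy hu
        simp only [Fin.snoc_castSucc] at hy hu ⊢
        by_cases hm : meets j
        · simp [hm]
        · simp only [if_neg hm] at hy hu ⊢
          refine hc'2 j _ _ _ _ ?_ hu
          intro v hv hvZ'
          have hvC : v ∉ C := fun hvC => hm ⟨v, hv, hvC⟩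
          have hvZ : v ∉ Z := fun hh => hvZ' (Finset.mem_sdiff.mpr ⟨hh, hvC⟩)
          exact hy v hv hvZ
    · intro yb u
      rw [Fin.prod_univ_castSucc]
      simp only [Fin.snoc_castSucc, Fin.snoc_last]
      have hsplit : (∏ j : Fin m'', if meets j then (1 : ℝ≥0) else φ' j yb u)
          = ∏ j ∈ Finset.univ.filter (fun j => ¬ meets j), φ' j yb u := by
        have h1 : (∏ j ∈ Finset.univ.filter (fun j => meets j),
            (if meets j then (1 : ℝ≥0) else φ' j yb u)) = 1 :=
          Finset.prod_eq_one fun j hj => if_pos (Finset.mem_filter.mp hj).2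
        have h2 : (∏ j ∈ Finset.univ.filter (fun j => ¬ meets j),
            (if meets j then (1 : ℝ≥0) else φ' j yb u))
            = ∏ j ∈ Finset.univ.filter (fun j => ¬ meets j), φ' j yb u :=
          Finset.prod_congr rfl fun j hj => if_neg (Finset.mem_filter.mp hj).2
        rw [← Finset.prod_filter_mul_prod_filter_not Finset.univ (fun j => meets j), h1, h2,
          one_mul]
      let E : (∀ i : {x // x ∈ Z}, S (i : V)) ≃
          (∀ i : {x // x ∈ C}, S (i : V)) × (∀ i : {x // x ∈ Z'}, S (i : V)) :=
        { toFun := fun h => (fun i => h ⟨i, hCZ i.2⟩, fun i => h ⟨i, hZ'Z i.2⟩)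
          invFun := fun p i => if hi : (i : V) ∈ C then p.1 ⟨i, hi⟩
            else p.2 ⟨i, Finset.mem_sdiff.mpr ⟨i.2, hi⟩⟩
          left_inv := fun h => by
            funext i
            by_cases hi : (i : V) ∈ C <;> simp [hi]
          right_inv := fun p => by
            obtain ⟨p1, p2⟩ := p
            simp only [Prod.mk.injEq]
            constructor
            · funext i; simp [i.2]
            · funext i
              have h2 : (i : V) ∉ C := (Finset.mem_sdiff.mp i.2).2
              simp [h2] }
      have hpt : ∀ (h1 : ∀ i : {x // x ∈ C}, S (i : V)) (h2 : ∀ i : {x // x ∈ Z'}, S (i : V)),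
          (fun i => if hi : i ∈ Z then E.symm (h1, h2) ⟨i, hi⟩ else yb i)
            = fun i => if hi : i ∈ Z' then h2 ⟨i, hi⟩ else sub yb h1 i := by
        intro h1 h2
        funext i
        by_cases hiC : i ∈ C
        · have hiZ : i ∈ Z := hCZ hiC
          have hiZ' : i ∉ Z' := fun hh => (Finset.mem_sdiff.mp hh).2 hiC
          simp [E, hiC, hiZ, hiZ', hsubdef]
        · by_cases hiZ : i ∈ Z
          · have hiZ' : i ∈ Z' := Finset.mem_sdiff.mpr ⟨hiZ, hiC⟩
            simp [E, hiC, hiZ, hiZ']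
          · have hiZ' : i ∉ Z' := fun hh => hiZ (Finset.mem_sdiff.mp hh).1
            simp [E, hiZ, hiZ', hsubdef, hiC]
      calc (∑ h : (∀ i : {x // x ∈ Z}, S (i : V)),
              ∏ k, Φ k (fun i => if hi : i ∈ Z then h ⟨i, hi⟩ else yb i) u)
          = ∑ p : (∀ i : {x // x ∈ C}, S (i : V)) × (∀ i : {x // x ∈ Z'}, S (i : V)),
              ∏ k, Φ k (fun i => if hi : i ∈ Z then E.symm p ⟨i, hi⟩ else yb i) u :=
            (Equiv.sum_comp E.symm _).symm
        _ = ∑ h1 : (∀ i : {x // x ∈ C}, S (i : V)),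
              ∑ h2 : (∀ i : {x // x ∈ Z'}, S (i : V)),
              ∏ k, Φ k (fun i => if hi : i ∈ Z' then h2 ⟨i, hi⟩ else sub yb h1 i) u := by
            rw [Fintype.sum_prod_type]
            exact Finset.sum_congr rfl fun h1 _ => Finset.sum_congr rfl fun h2 _ => by
              rw [hpt h1 h2]
        _ = ∑ h1 : (∀ i : {x // x ∈ C}, S (i : V)), ∏ j, φ' j (sub yb h1) u :=
            Finset.sum_congr rfl fun h1 _ => hc'3 (sub yb h1) u
        _ = ∑ h1 : (∀ i : {x // x ∈ C}, S (i : V)),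
              (∏ j ∈ Finset.univ.filter (fun j => meets j), φ' j (sub yb h1) u) *
              ∏ j ∈ Finset.univ.filter (fun j => ¬ meets j), φ' j yb u := by
            refine Finset.sum_congr rfl fun h1 _ => ?_
            rw [← Finset.prod_filter_mul_prod_filter_not Finset.univ (fun j => meets j)]
            congr 1
            refine Finset.prod_congr rfl fun j hj => ?_
            have hm : ¬ meets j := (Finset.mem_filter.mp hj).2
            refine hc'2 j _ _ _ _ ?_ (fun v _ _ => rfl)
            intro v hv _
            have hvC : v ∉ C := fun hvC => hm ⟨v, hv, hvC⟩
            simp [hsubdef, hvC]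
        _ = newφ yb u * ∏ j ∈ Finset.univ.filter (fun j => ¬ meets j), φ' j yb u := by
            rw [hnewφdef, ← Finset.sum_mul]
        _ = (∏ j : Fin m'', if meets j then 1 else φ' j yb u) * newφ yb u := by
            rw [hsplit, mul_comm]

/-- Lemma 1: if the joint weight
`P(y,u) = ∏_q Ψ_q(y|_q) · ∏_{i∈Z} Ψ_i(y i, u i)` factorizes over cliques of `G`,
then the marginal obtained by summing out the hidden coordinates `y i`, `i ∈ Z`,
factorizes according to the perturbed graph `G_Z`. -/
theorem stmt10 {V : Type*} [Fintype V] [DecidableEq V] (G : SimpleGraph V)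
    (Z : Finset V)
    (S : V → Type*) [∀ i, Fintype (S i)] [∀ i, Nonempty (S i)]
    (T : V → Type*) [∀ i, Fintype (T i)] [∀ i, Nonempty (T i)]
    (m : ℕ) (q : Fin m → Set V) (hq : ∀ k, G.IsClique (q k))
    (Ψ : Fin m → (∀ i, S i) → ℝ≥0)
    (hΨ : ∀ k (y y' : ∀ i, S i), (∀ v ∈ q k, y v = y' v) → Ψ k y = Ψ k y')
    (Ψp : ∀ i : V, S i → T i → ℝ≥0)
    (P : (∀ i, S i) → (∀ i, T i) → ℝ≥0)
    (hP : ∀ y u, P y u = (∏ k, Ψ k y) * ∏ i ∈ Z, Ψp i (y i) (u i))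
    (f : (∀ i, S i) → (∀ i, T i) → ℝ≥0)
    (hf : ∀ yb u, f yb u =
      ∑ h : (∀ i : {x // x ∈ Z}, S i),
        P (fun i => if hi : i ∈ Z then h ⟨i, hi⟩ else yb i) u) :
    ∃ (m' : ℕ) (c : Fin m' → Set V)
      (φ : Fin m' → (∀ i, S i) → (∀ i, T i) → ℝ≥0),
      (∀ k, (c k).Pairwise (PerturbedAdj G (↑Z))) ∧
      (∀ k (yb yb' : ∀ i, S i) (u u' : ∀ i, T i),
        (∀ v ∈ c k, v ∉ Z → yb v = yb' v) →
        (∀ v ∈ c k, v ∈ Z → u v = u' v) →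
        φ k yb u = φ k yb' u') ∧
      (∀ yb u, f yb u = ∏ k, φ k yb u) := by
  classical
  obtain ⟨m', c, φ, hA, hB, hC⟩ := auxmain G (↑Z : Set V) S T Z (Fin m ⊕ {x // x ∈ Z})
    (Sum.elim q (fun i => {(i : V)}))
    (by
      rintro (k | i)
      · exact hq k
      · exact G.isClique_singleton _)
    (Sum.elim (fun k y _ => Ψ k y) (fun i y u => Ψp i (y i) (u i)))
    (by
      rintro (k | i) y y' u u' hy hu
      · exact hΨ k y y' hy
      · simp only [Sum.elim_inr]
        rw [hy i (Set.mem_singleton _), hu i (Set.mem_singleton _) (by exact_mod_cast i.2)])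
  refine ⟨m', c, φ, hA, ?_, ?_⟩
  · intro k yb yb' u u' h1 h2
    exact hB k yb yb' u u' h1 (fun v hv hvW => h2 v hv (by exact_mod_cast hvW))
  · intro yb u
    rw [hf, ← hC yb u]
    refine Finset.sum_congr rfl fun h _ => ?_
    rw [hP, Fintype.prod_sum_type]
    congr 1
    exact (Finset.prod_coe_sort Z _).symm
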